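/- arXiv:1810.11938 — 3 statements merged into one kernel-verified Lean document; each statement's English description precedes it below -/
import Mathlib

section
/- Define d(k) = 3·a(k) + k for positive integers k. Then for every positive integer k, {d(k)·φ} = 1 − (√5/φ²)·{kφ}. -/
noncomputable def φ : ℝ := (1 + Real.sqrt 5) / 2
noncomputable def a (k : ℕ) : ℤ := ⌊(k : ℝ) * φ⌋
noncomputable def d (k : ℕ) : ℤ := 3 * a k + k

/-!
Write `kφ = a(k) + f` with `f = {kφ}`. Using `φ² = φ + 1` and `a(k) = kφ - f`,
`d(k)·φ = 4·a(k) + 3k - (3φ - 4)·f`, and `3φ - 4 = √5/φ²` lies in `(0, 1)`. Since `φ` is irrational,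
`f > 0` for `k > 0`, so `d(k)·φ` sits just below an integer, at distance `(√5/φ²)·f`.
-/

open Real

theorem Int.fract_intCast_sub_of_pos_of_lt_one {R : Type*} [Ring R] [LinearOrder R]
    [IsStrictOrderedRing R] [FloorRing R] {t : R} (n : ℤ) (h0 : 0 < t) (h1 : t < 1) :
    Int.fract ((n : R) - t) = 1 - t := by
  have ht : Int.fract t = t := Int.fract_eq_self.mpr ⟨h0.le, h1⟩
  rw [sub_eq_add_neg, Int.fract_intCast_add, Int.fract_neg (ht.symm ▸ h0.ne'), ht]

theorem Irrational.fract_natCast_mul_pos {x : ℝ} (hx : Irrational x) {k : ℕ} (hk : 0 < k) :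
    0 < Int.fract ((k : ℝ) * x) :=
  Int.fract_pos.mpr ((hx.natCast_mul hk.ne').ne_int _)

theorem sqrt_five_div_goldenRatio_sq : √5 / goldenRatio ^ 2 = 3 * goldenRatio - 4 := by
  have h5 : √5 ^ 2 = 5 := sq_sqrt (by norm_num)
  rw [div_eq_iff (pow_ne_zero 2 goldenRatio_ne_zero), goldenRatio_sq]
  unfold goldenRatio
  linear_combination (-3 / 4) * h5

theorem three_mul_goldenRatio_sub_four_mem_Ioo : 3 * goldenRatio - 4 ∈ Set.Ioo (0 : ℝ) 1 := by
  have h5 : √5 ^ 2 = 5 := sq_sqrt (by norm_num)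
  have hs : 0 ≤ √5 := sqrt_nonneg 5
  unfold goldenRatio
  constructor <;> nlinarith

theorem φ_eq_goldenRatio : φ = goldenRatio := by rfl

theorem d_mul_φ (k : ℕ) :
    (d k : ℝ) * φ = ((4 * a k + 3 * k : ℤ) : ℝ) - (3 * φ - 4) * Int.fract ((k : ℝ) * φ) := by
  have ha : (a k : ℝ) = k * φ - Int.fract ((k : ℝ) * φ) := (Int.self_sub_fract _).symm
  have hφ : φ ^ 2 = φ + 1 := goldenRatio_sq
  simp only [d, Int.cast_add, Int.cast_mul, Int.cast_ofNat, Int.cast_natCast]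
  rw [ha]
  linear_combination 3 * (k : ℝ) * hφ

theorem fract_d_phi (k : ℕ) (hk : 0 < k) :
    Int.fract ((d k : ℝ) * φ) = 1 - (Real.sqrt 5 / φ ^ 2) * Int.fract ((k : ℝ) * φ) := by
  obtain ⟨hc0, hc1⟩ := three_mul_goldenRatio_sub_four_mem_Ioo
  have hf0 : 0 < Int.fract ((k : ℝ) * φ) := goldenRatio_irrational.fract_natCast_mul_pos hk
  have hf1 : Int.fract ((k : ℝ) * φ) < 1 := Int.fract_lt_one _
  rw [d_mul_φ, φ_eq_goldenRatio, sqrt_five_div_goldenRatio_sq]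
  exact Int.fract_intCast_sub_of_pos_of_lt_one _ (mul_pos hc0 hf0)
    (mul_lt_one_of_nonneg_of_lt_one_left hc0.le hc1 hf1.le)
end

section
/- Define c(k) = a(k) + 2k − 1 for positive integers k. Then for every positive integer k: if {kφ} > 1/√5, then {c(k)·φ} = (√5/φ)·{kφ} + (1 − √5)/2, and if {kφ} < 1/√5, then {c(k)·φ} = (√5/φ)·{kφ} + (3 − √5)/2. -/
noncomputable def c (k : ℕ) : ℤ := a k + 2 * k - 1

/-!
Since `φ² = φ + 1`, writing `⌊kφ⌋ = kφ - {kφ}` gives `c(k)·φ ≡ (3 - φ){kφ} - φ` modulo `ℤ`, and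
`√5 / φ = 3 - φ`. The number `y = (3 - φ){kφ} - φ` lies in `[-2, 0)`, and `y + 1 = (φ - 1)(√5{kφ} - 1)`,
so `y ≥ -1` exactly when `{kφ} ≥ 1/√5`; hence `{c(k)·φ}` is `y + 1` or `y + 2`.
-/

open Real

lemma Int.fract_eq_add_of_nonneg_of_lt {R : Type*} [Ring R] [LinearOrder R] [IsStrictOrderedRing R]
    [FloorRing R] {x : R} {n : ℤ} (h₀ : 0 ≤ x + n) (h₁ : x + n < 1) : Int.fract x = x + n :=
  Int.fract_eq_iff.2 ⟨h₀, h₁, -n, by simp⟩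

lemma floor_add_two_mul_sub_one_mul {α : ℝ} (hα : α ^ 2 = α + 1) (t : ℝ) :
    (⌊t * α⌋ + 2 * t - 1) * α = t + 3 * ⌊t * α⌋ + ((3 - α) * Int.fract (t * α) - α) := by
  linear_combination t * hα + (α - 3) * Int.floor_add_fract (t * α)

lemma sqrt_five_div_goldenRatio : √5 / goldenRatio = 3 - goldenRatio := by
  rw [div_eq_iff goldenRatio_ne_zero, goldenRatio]
  linear_combination (1 / 4 : ℝ) * sq_sqrt (show (0 : ℝ) ≤ 5 by norm_num)

lemma three_sub_goldenRatio_mul_sub_goldenRatio_add_one (x : ℝ) :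
    (3 - goldenRatio) * x - goldenRatio + 1 = (goldenRatio - 1) * (√5 * x - 1) := by
  rw [goldenRatio]
  linear_combination (-x / 2) * sq_sqrt (show (0 : ℝ) ≤ 5 by norm_num)

lemma fract_three_sub_goldenRatio_mul_sub_goldenRatio {x : ℝ} (hx₀ : 0 ≤ x) (hx₁ : x < 1) :
    (1 / √5 < x →
      Int.fract ((3 - goldenRatio) * x - goldenRatio) = (3 - goldenRatio) * x + (1 - √5) / 2) ∧
    (x < 1 / √5 →
      Int.fract ((3 - goldenRatio) * x - goldenRatio) = (3 - goldenRatio) * x + (3 - √5) / 2) := by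
  have hy := three_sub_goldenRatio_mul_sub_goldenRatio_add_one x
  have hsqrt : 2 < √5 := Real.lt_sqrt zero_le_two |>.2 (by norm_num)
  have hφ₁ : 3 / 2 < goldenRatio := by rw [goldenRatio]; linarith
  have hφ₂ := goldenRatio_lt_two
  refine ⟨fun h => ?_, fun h => ?_⟩
  · rw [div_lt_iff₀' (by positivity)] at h
    rw [Int.fract_eq_add_of_nonneg_of_lt (n := 1) (by push_cast; nlinarith) (by push_cast; nlinarith),
      goldenRatio]
    push_cast
    ring
  · rw [lt_div_iff₀' (by positivity)] at h
    rw [Int.fract_eq_add_of_nonneg_of_lt (n := 2) (by push_cast; nlinarith) (by push_cast; nlinarith),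
      goldenRatio]
    push_cast
    ring

lemma fract_c_mul_phi (k : ℕ) :
    Int.fract ((c k : ℝ) * φ) = Int.fract ((3 - φ) * Int.fract (k * φ) - φ) := by
  rw [c, a]
  push_cast
  rw [floor_add_two_mul_sub_one_mul (α := φ) goldenRatio_sq k]
  exact_mod_cast Int.fract_intCast_add (k + 3 * ⌊(k : ℝ) * φ⌋) _

theorem fract_c_phi_general (k : ℕ) :
    (Int.fract ((k : ℝ) * φ) > 1 / Real.sqrt 5 →
      Int.fract ((c k : ℝ) * φ)
        = (Real.sqrt 5 / φ) * Int.fract ((k : ℝ) * φ) + (1 - Real.sqrt 5) / 2) ∧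
    (Int.fract ((k : ℝ) * φ) < 1 / Real.sqrt 5 →
      Int.fract ((c k : ℝ) * φ)
        = (Real.sqrt 5 / φ) * Int.fract ((k : ℝ) * φ) + (3 - Real.sqrt 5) / 2) := by
  rw [fract_c_mul_phi, show φ = goldenRatio from rfl, sqrt_five_div_goldenRatio]
  exact fract_three_sub_goldenRatio_mul_sub_goldenRatio (Int.fract_nonneg _) (Int.fract_lt_one _)

theorem fract_c_phi (k : ℕ) (hk : 0 < k) :
    (Int.fract ((k : ℝ) * φ) > 1 / Real.sqrt 5 →
      Int.fract ((c k : ℝ) * φ)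
        = (Real.sqrt 5 / φ) * Int.fract ((k : ℝ) * φ) + (1 - Real.sqrt 5) / 2) ∧
    (Int.fract ((k : ℝ) * φ) < 1 / Real.sqrt 5 →
      Int.fract ((c k : ℝ) * φ)
        = (Real.sqrt 5 / φ) * Int.fract ((k : ℝ) * φ) + (3 - Real.sqrt 5) / 2) :=
  fract_c_phi_general k
end

section
/- Define c(k) = a(k) + 2k − 1 and d(k) = 3·a(k) + k for positive integers k, and let B = {⌊mφ²⌋ : m a positive integer}. Then for every positive integer k, it is not the case that both c(k) ∈ B and d(k) ∈ B; equivalently, for every k at least one of c(k), d(k) belongs to the complementary Beatty sequence A = {⌊mφ⌋ : m a positive integer}. -/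
/-- The Beatty sequence `A = {⌊mφ⌋ : m ≥ 1}`. -/
noncomputable def Aset : Set ℤ := {x | ∃ m : ℕ, 0 < m ∧ x = ⌊(m : ℝ) * φ⌋}

/-- The Beatty sequence `B = {⌊mφ²⌋ : m ≥ 1}`. -/
noncomputable def Bset : Set ℤ := {x | ∃ m : ℕ, 0 < m ∧ x = ⌊(m : ℝ) * φ ^ 2⌋}

theorem setOf_floor_natCast_mul_eq (r : ℝ) :
    {x : ℤ | ∃ m : ℕ, 0 < m ∧ x = ⌊(m : ℝ) * r⌋} = {beattySeq r k | k > 0} := by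
  ext x
  constructor
  · rintro ⟨m, hm, rfl⟩
    exact ⟨m, by exact_mod_cast hm, by simp [beattySeq]⟩
  · rintro ⟨k, hk, rfl⟩
    lift k to ℕ using hk.le
    exact ⟨k, by exact_mod_cast hk, by simp [beattySeq]⟩

theorem Irrational.disjoint_beattySeq_pos {r s : ℝ} (hrs : r.HolderConjugate s)
    (hr : Irrational r) : Disjoint {beattySeq r k | k > 0} {beattySeq s k | k > 0} := by
  rw [Set.disjoint_left]
  rintro _ ⟨k, hk, rfl⟩ hs
  have hpos : 0 < beattySeq r k := by
    rw [beattySeq, Int.floor_pos]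
    exact one_le_mul_of_one_le_of_one_le (by exact_mod_cast hk) hrs.lt.le
  have hsymm := (hr.beattySeq_symmDiff_beattySeq_pos hrs).ge hpos
  exact (Set.mem_symmDiff.mp hsymm).elim (fun h ↦ h.2 hs) (fun h ↦ h.2 ⟨k, hk, rfl⟩)

theorem φ_sq : φ ^ 2 = φ + 1 := Real.goldenRatio_sq

theorem one_lt_φ : 1 < φ := Real.one_lt_goldenRatio

theorem φ_lt_two : φ < 2 := Real.goldenRatio_lt_two

theorem irrational_φ : Irrational φ := Real.goldenRatio_irrational

theorem holderConjugate_φ_φ_sq : φ.HolderConjugate (φ ^ 2) := by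
  rw [Real.holderConjugate_iff_eq_conjExponent one_lt_φ, eq_div_iff (by linarith [one_lt_φ])]
  linear_combination φ * φ_sq

theorem disjoint_Aset_Bset : Disjoint Aset Bset := by
  rw [Aset, Bset, setOf_floor_natCast_mul_eq, setOf_floor_natCast_mul_eq]
  exact Irrational.disjoint_beattySeq_pos holderConjugate_φ_φ_sq irrational_φ

theorem floor_intCast_mul_φ_mem_Aset {m : ℤ} (hm : 0 < m) : ⌊(m : ℝ) * φ⌋ ∈ Aset := by
  rw [Aset, setOf_floor_natCast_mul_eq]
  exact ⟨m, hm, rfl⟩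

theorem floor_eq_of_eq_add {x : ℝ} {z : ℤ} {ε : ℝ} (hx : x = z + ε) (h₀ : 0 ≤ ε) (h₁ : ε < 1) :
    ⌊x⌋ = z := by
  rw [hx, Int.floor_intCast_add, Int.floor_eq_zero_iff.mpr ⟨h₀, h₁⟩, add_zero]

section

variable (k : ℕ)

theorem a_eq_sub_fract : (a k : ℝ) = k * φ - Int.fract ((k : ℝ) * φ) :=
  (Int.self_sub_fract _).symm

theorem fract_mul_φ_mul_ne : Int.fract ((k : ℝ) * φ) * (2 * φ - 1) ≠ φ := by
  intro h
  have hlin : ((k - 2 * a k - 1 : ℤ) : ℝ) * φ = ((-(2 * k + a k) : ℤ) : ℝ) := by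
    push_cast
    linear_combination h - (2 * φ - 1) * a_eq_sub_fract k - 2 * k * φ_sq
  by_cases hp : (k : ℤ) - 2 * a k - 1 = 0
  · rw [hp, Int.cast_zero, zero_mul, eq_comm, Int.cast_eq_zero] at hlin
    omega
  · exact (irrational_φ.intCast_mul hp).ne_int _ hlin

theorem d_eq_floor_mul_φ_of_lt (h : Int.fract ((k : ℝ) * φ) * (2 * φ - 1) < φ) :
    d k = ⌊((a k + 2 * k : ℤ) : ℝ) * φ⌋ := by
  have hθ := Int.fract_nonneg ((k : ℝ) * φ)
  refine (floor_eq_of_eq_add (ε := Int.fract ((k : ℝ) * φ) * (3 - φ)) ?_ ?_ ?_).symm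
  · rw [d]
    push_cast
    linear_combination (φ - 3) * a_eq_sub_fract k + k * φ_sq
  · exact mul_nonneg hθ (by linarith [φ_lt_two])
  · refine lt_of_mul_lt_mul_right ?_ (zero_lt_one.trans one_lt_φ).le
    linear_combination h - Int.fract ((k : ℝ) * φ) * φ_sq

theorem c_eq_floor_mul_φ_of_gt (h : φ < Int.fract ((k : ℝ) * φ) * (2 * φ - 1)) :
    c k = ⌊((2 * a k - k + 1 : ℤ) : ℝ) * φ⌋ := by
  have hθ := Int.fract_lt_one ((k : ℝ) * φ)
  refine (floor_eq_of_eq_add (ε := 1 + φ - Int.fract ((k : ℝ) * φ) * (2 * φ - 1)) ?_ ?_ ?_).symm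
  · rw [c]
    push_cast
    linear_combination (2 * φ - 1) * a_eq_sub_fract k + 2 * k * φ_sq
  · nlinarith [one_lt_φ, φ_lt_two]
  · linarith

end

theorem not_both_c_d_in_B (k : ℕ) (hk : 0 < k) :
    ¬(c k ∈ Bset ∧ d k ∈ Bset) ∧ (c k ∈ Aset ∨ d k ∈ Aset) := by
  have ha : (k : ℤ) ≤ a k :=
    Int.le_floor.mpr (by simpa using le_mul_of_one_le_right k.cast_nonneg one_lt_φ.le)
  have hA : c k ∈ Aset ∨ d k ∈ Aset := by
    rcases (fract_mul_φ_mul_ne k).lt_or_gt with h | h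
    · exact .inr (d_eq_floor_mul_φ_of_lt k h ▸ floor_intCast_mul_φ_mem_Aset (by omega))
    · exact .inl (c_eq_floor_mul_φ_of_gt k h ▸ floor_intCast_mul_φ_mem_Aset (by omega))
  refine ⟨fun ⟨hc, hd⟩ ↦ ?_, hA⟩
  have hAB := disjoint_Aset_Bset
  rcases hA with hA | hA
  exacts [hAB.notMem_of_mem_left hA hc, hAB.notMem_of_mem_left hA hd]
end
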